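/- Let 2/3 < ν < 4/5 and define S_SG(ζ) := tan((ζ + iπν)/(2i)) / tan((ζ − iπν)/(2i)). Then S_SG has a simple pole at the t-channel point ζ = iπ(1 − ν) with residue equal to minus the residue at the s-channel point: the limit as ζ → iπ(1−ν) of (ζ − iπ(1−ν))·S_SG(ζ) equals −2i·tan(πν). -/
import Mathlib


open Complex Filter Topology

/-- The sine-Gordon breather–breather (b₁b₁) scattering function. -/
noncomputable def SSG (ν : ℝ) (ζ : ℂ) : ℂ :=
  Complex.tan ((ζ + Complex.I * (Real.pi : ℂ) * (ν : ℂ)) / (2 * Complex.I)) /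
  Complex.tan ((ζ - Complex.I * (Real.pi : ℂ) * (ν : ℂ)) / (2 * Complex.I))

/-- S_SG has a simple pole at the t-channel point ζ = iπ(1 − ν) with
residue lim_{ζ→iπ(1−ν)} (ζ − iπ(1−ν))·S_SG(ζ) = −2i·tan(πν), minus the s-channel
residue. -/
theorem SSG_t_channel_residue (ν : ℝ) (h1 : 2/3 < ν) (h2 : ν < 4/5) :
    Filter.Tendsto
      (fun ζ : ℂ => (ζ - Complex.I * (Real.pi : ℂ) * ((1 - ν : ℝ) : ℂ)) * SSG ν ζ)
      (𝓝[≠] (Complex.I * (Real.pi : ℂ) * ((1 - ν : ℝ) : ℂ)))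
      (𝓝 (-(2 * Complex.I * ((Real.tan (Real.pi * ν) : ℝ) : ℂ)))) := by
  have hπ := Real.pi_pos
  set x : ℝ := Real.pi * ν with hx
  have hx1 : Real.pi / 2 < x := by
    rw [hx]; nlinarith
  have hx2 : x < Real.pi := by
    rw [hx]; nlinarith
  have hsin : 0 < Real.sin x := Real.sin_pos_of_pos_of_lt_pi (by linarith) hx2
  have hcos : Real.cos x < 0 := Real.cos_neg_of_pi_div_two_lt_of_lt hx1 (by linarith)
  have htan_ne : Real.tan x ≠ 0 := by
    rw [Real.tan_eq_sin_div_cos]; exact div_ne_zero hsin.ne' hcos.ne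
  set p : ℂ := Complex.I * (Real.pi : ℂ) * ((1 - ν : ℝ) : ℂ) with hp
  set c2 : ℂ := (Real.pi : ℂ) / 2 with hc2
  set w : ℂ → ℂ := fun ζ => (ζ + Complex.I * (Real.pi : ℂ) * (ν : ℂ)) / (2 * Complex.I)
    with hwdef
  set v : ℂ → ℂ := fun ζ => (ζ - Complex.I * (Real.pi : ℂ) * (ν : ℂ)) / (2 * Complex.I)
    with hvdef
  have hI : (2 : ℂ) * Complex.I ≠ 0 := by simp [Complex.I_ne_zero]
  have hwp : w p = c2 := by
    simp only [hwdef, hp, hc2]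
    push_cast
    field_simp
    ring
  have hvp : v p = ((Real.pi / 2 - x : ℝ) : ℂ) := by
    simp only [hvdef, hp, hx]
    push_cast
    field_simp
    ring
  have hlin : ∀ ζ : ℂ, ζ - p = 2 * Complex.I * (w ζ - c2) := by
    intro ζ
    simp only [hwdef, hp, hc2]
    push_cast
    field_simp
    ring
  have hwcont : Continuous w := by
    simp only [hwdef]
    exact (continuous_id.add continuous_const).div_const _
  have hvcont : Continuous v := by
    simp only [hvdef]
    exact (continuous_id.sub continuous_const).div_const _
  -- key slope limit : cos z / (z - π/2) → -1 as z → π/2 (punctured)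
  have hd : HasDerivAt Complex.cos (-1) c2 := by
    have h := Complex.hasDerivAt_cos c2
    have : Complex.sin c2 = 1 := by
      rw [hc2]; exact Complex.sin_pi_div_two
    rw [this] at h
    exact h
  have hslope : Tendsto (fun z : ℂ => Complex.cos z / (z - c2)) (𝓝[≠] c2) (𝓝 (-1)) := by
    have h := hasDerivAt_iff_tendsto_slope.mp hd
    refine h.congr fun z => ?_
    rw [slope_def_field, show Complex.cos c2 = 0 from by rw [hc2]; exact Complex.cos_pi_div_two,
      sub_zero]
  -- w maps punctured nbhd of p to punctured nbhd of c2
  have hw : Tendsto w (𝓝[≠] p) (𝓝[≠] c2) := by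
    rw [tendsto_nhdsWithin_iff]
    constructor
    · have h := hwcont.continuousAt (x := p)
      rw [ContinuousAt, hwp] at h
      exact h.mono_left nhdsWithin_le_nhds
    · filter_upwards [self_mem_nhdsWithin] with ζ hζ
      intro hcontra
      apply hζ
      have h1 : ζ - p = 2 * Complex.I * (w ζ - c2) := hlin ζ
      rw [hcontra] at h1
      simpa [sub_eq_zero] using h1
  have A : Tendsto (fun ζ : ℂ => Complex.cos (w ζ) / (w ζ - c2)) (𝓝[≠] p) (𝓝 (-1)) :=
    hslope.comp hw
  have A' : Tendsto (fun ζ : ℂ => (Complex.cos (w ζ) / (w ζ - c2))⁻¹) (𝓝[≠] p)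
      (𝓝 ((-1 : ℂ)⁻¹)) := A.inv₀ (by norm_num)
  have B : Tendsto (fun ζ : ℂ => Complex.sin (w ζ)) (𝓝[≠] p) (𝓝 1) := by
    have h := (Complex.continuous_sin.comp hwcont).continuousAt (x := p)
    rw [ContinuousAt] at h
    have : Complex.sin (w p) = 1 := by rw [hwp, hc2]; exact Complex.sin_pi_div_two
    simp only [Function.comp] at h
    rw [this] at h
    exact h.mono_left nhdsWithin_le_nhds
  have hcosvp : Complex.cos (v p) ≠ 0 := by
    rw [hvp, ← Complex.ofReal_cos]
    rw [Real.cos_pi_div_two_sub]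
    exact_mod_cast hsin.ne'
  have htanvp : Complex.tan (v p) = ((Real.tan x)⁻¹ : ℝ) := by
    rw [hvp, ← Complex.ofReal_tan, Real.tan_pi_div_two_sub]
  have C : Tendsto (fun ζ : ℂ => Complex.tan (v ζ)) (𝓝[≠] p)
      (𝓝 (((Real.tan x)⁻¹ : ℝ) : ℂ)) := by
    have h : ContinuousAt Complex.tan (v p) := Complex.continuousAt_tan.mpr hcosvp
    have h2 := h.comp (hvcont.continuousAt (x := p))
    rw [ContinuousAt] at h2
    simp only [Function.comp] at h2
    rw [htanvp] at h2
    exact h2.mono_left nhdsWithin_le_nhds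
  have hCne : (((Real.tan x)⁻¹ : ℝ) : ℂ) ≠ 0 := by
    exact_mod_cast inv_ne_zero htan_ne
  have hlim := (((A'.const_mul (2 * Complex.I)).mul B).div C hCne)
  have key : ∀ ζ : ℂ, (ζ - p) * SSG ν ζ =
      (2 * Complex.I * (Complex.cos (w ζ) / (w ζ - c2))⁻¹ * Complex.sin (w ζ)) /
        Complex.tan (v ζ) := by
    intro ζ
    rw [SSG, Complex.tan_eq_sin_div_cos ((ζ + Complex.I * (Real.pi : ℂ) * (ν : ℂ)) / (2 * Complex.I))]
    have h1 : ζ - p = 2 * Complex.I * (w ζ - c2) := hlin ζ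
    rw [show (ζ + Complex.I * (Real.pi : ℂ) * (ν : ℂ)) / (2 * Complex.I) = w ζ from rfl,
      show (ζ - Complex.I * (Real.pi : ℂ) * (ν : ℂ)) / (2 * Complex.I) = v ζ from rfl,
      h1, inv_div]
    ring
  have hval : (2 * Complex.I * (-1 : ℂ)⁻¹ * 1) / (((Real.tan x)⁻¹ : ℝ) : ℂ) =
      -(2 * Complex.I * ((Real.tan (Real.pi * ν) : ℝ) : ℂ)) := by
    rw [← hx]
    push_cast
    rw [div_eq_mul_inv, inv_inv]
    ring
  rw [← hval]
  exact hlim.congr fun ζ => (key ζ).symm
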